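/- arXiv:2511.10483 — 2 statements merged into one kernel-verified Lean document; each statement's English description precedes it below -/
import Mathlib

section
/- For nonzero closed convex cones P, Q in ℝⁿ, the max-min angle and the min-max angle with the reflected cone are supplementary: Θ(P,Q) + Θ̂(P,−Q) = π, where Θ̂(P,Q) := min_{u∈P∩Sₙ} max_{v∈Q∩Sₙ} arccos⟨u,v⟩. -/
open Real Set
open scoped ENNReal

noncomputable section

local notation "⟪" x ", " y "⟫" => @inner ℝ _ _ x y

/-- Euclidean space ℝⁿ. -/
abbrev E (n : ℕ) := EuclideanSpace ℝ (Fin n)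

/-- Unit sphere Sₙ in ℝⁿ. -/
def sph (n : ℕ) : Set (E n) := {u | ‖u‖ = 1}

/-- `P` is a closed convex cone in ℝⁿ. -/
def IsClosedConvexCone {n : ℕ} (P : Set (E n)) : Prop :=
  IsClosed P ∧ Convex ℝ P ∧ ∀ c : ℝ, 0 ≤ c → ∀ x ∈ P, c • x ∈ P

/-- inner minimum: min_{v ∈ Q∩Sₙ} arccos ⟨u,v⟩. -/
def innerMin {n : ℕ} (Q : Set (E n)) (u : E n) : ℝ :=
  sInf ((fun v => Real.arccos ⟪u, v⟫) '' (Q ∩ sph n))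

/-- max-min angle Θ(P,Q) = max_{u ∈ P∩Sₙ} min_{v ∈ Q∩Sₙ} arccos ⟨u,v⟩. -/
def theta {n : ℕ} (P Q : Set (E n)) : ℝ :=
  sSup (innerMin Q '' (P ∩ sph n))

/-- inner maximum: max_{v ∈ Q∩Sₙ} arccos ⟨u,v⟩. -/
def innerMax {n : ℕ} (Q : Set (E n)) (u : E n) : ℝ :=
  sSup ((fun v => Real.arccos ⟪u, v⟫) '' (Q ∩ sph n))

/-- min-max angle Θ̂(P,Q) = min_{u ∈ P∩Sₙ} max_{v ∈ Q∩Sₙ} arccos ⟨u,v⟩. -/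
def thetaHat {n : ℕ} (P Q : Set (E n)) : ℝ :=
  sInf (innerMax Q '' (P ∩ sph n))

lemma sSup_const_sub' (A : Set ℝ) (hA : A.Nonempty) (hbd : BddBelow A) (c : ℝ) :
    sSup ((fun a => c - a) '' A) = c - sInf A := by
  have h : IsGLB A (sInf A) := isGLB_csInf hA hbd
  have hl : IsLUB ((fun a => c - a) '' A) (c - sInf A) := by
    constructor
    · rintro x ⟨a, ha, rfl⟩
      have := h.1 ha
      show c - a ≤ c - sInf A
      linarith
    · intro b hb
      have hlb : c - b ∈ lowerBounds A := by
        intro a ha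
        have : c - a ≤ b := hb ⟨a, ha, rfl⟩
        linarith
      have := h.2 hlb
      linarith
  exact hl.csSup_eq (hA.image _)

lemma sInf_const_sub' (A : Set ℝ) (hA : A.Nonempty) (hbd : BddAbove A) (c : ℝ) :
    sInf ((fun a => c - a) '' A) = c - sSup A := by
  have h : IsLUB A (sSup A) := isLUB_csSup hA hbd
  have hl : IsGLB ((fun a => c - a) '' A) (c - sSup A) := by
    constructor
    · rintro x ⟨a, ha, rfl⟩
      have := h.1 ha
      show c - sSup A ≤ c - a
      linarith
    · intro b hb
      have hub : c - b ∈ upperBounds A := by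
        intro a ha
        have : b ≤ c - a := hb ⟨a, ha, rfl⟩
        linarith
      have := h.2 hub
      linarith
  exact hl.csInf_eq (hA.image _)

lemma neg_inter_sph {n : ℕ} (Q : Set (E n)) : (-Q) ∩ sph n = -(Q ∩ sph n) := by
  ext v
  simp [sph, Set.mem_neg, norm_neg]

lemma innerMax_neg {n : ℕ} (Q : Set (E n)) (u : E n) (hQne : (Q ∩ sph n).Nonempty) :
    innerMax (-Q) u = π - innerMin Q u := by
  have hset : (fun v => Real.arccos ⟪u, v⟫) '' ((-Q) ∩ sph n)
      = (fun a => π - a) '' ((fun v => Real.arccos ⟪u, v⟫) '' (Q ∩ sph n)) := by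
    rw [neg_inter_sph]
    ext x
    constructor
    · rintro ⟨v, hv, rfl⟩
      refine ⟨Real.arccos ⟪u, -v⟫, ⟨-v, hv, rfl⟩, ?_⟩
      rw [inner_neg_right, Real.arccos_neg]
      ring
    · rintro ⟨a, ⟨v, hv, rfl⟩, rfl⟩
      refine ⟨-v, by simpa using hv, ?_⟩
      show Real.arccos ⟪u, -v⟫ = π - Real.arccos ⟪u, v⟫
      rw [inner_neg_right, Real.arccos_neg]
  have hbd : BddBelow ((fun v => Real.arccos ⟪u, v⟫) '' (Q ∩ sph n)) := by
    refine ⟨0, ?_⟩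
    rintro x ⟨v, hv, rfl⟩
    exact Real.arccos_nonneg _
  rw [innerMax, innerMin, hset, sSup_const_sub' _ ((Set.Nonempty.image _ hQne)) hbd]

lemma innerMin_mem {n : ℕ} (Q : Set (E n)) (u : E n) (hQne : (Q ∩ sph n).Nonempty) :
    0 ≤ innerMin Q u ∧ innerMin Q u ≤ π := by
  obtain ⟨v, hv⟩ := hQne
  constructor
  · apply le_csInf (Set.Nonempty.image _ ⟨v, hv⟩)
    rintro x ⟨w, hw, rfl⟩
    exact Real.arccos_nonneg _
  · refine csInf_le_of_le ⟨0, ?_⟩ ⟨v, hv, rfl⟩ (Real.arccos_le_pi _)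
    rintro x ⟨w, hw, rfl⟩
    exact Real.arccos_nonneg _

/-- Θ(P,Q) + Θ̂(P,−Q) = π. -/
theorem theta_add_thetaHat_neg {n : ℕ} (P Q : Set (E n))
    (hP : IsClosedConvexCone P) (hQ : IsClosedConvexCone Q)
    (hPne : (P ∩ sph n).Nonempty) (hQne : (Q ∩ sph n).Nonempty) :
    theta P Q + thetaHat P (-Q) = π := by
  have hset : innerMax (-Q) '' (P ∩ sph n)
      = (fun a => π - a) '' (innerMin Q '' (P ∩ sph n)) := by
    rw [← Set.image_comp]
    apply Set.image_congr
    intro u _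
    exact innerMax_neg Q u hQne
  have hbd : BddAbove (innerMin Q '' (P ∩ sph n)) := by
    refine ⟨π, ?_⟩
    rintro x ⟨u, hu, rfl⟩
    exact (innerMin_mem Q u hQne).2
  rw [theta, thetaHat, hset, sInf_const_sub' _ ((Set.Nonempty.image _ hPne)) hbd]
  ring
end
end

section
/- For 1 ≤ r ≤ ∞, the function dis_r(C,D) := ‖(Λ(C,D), Λ(D,C))‖_r, where Λ(C,D) = max_{x∈C} min_{y∈D} ‖x−y‖ and ‖·‖_r is the ℓʳ-norm on ℝ², is a metric on the collection of nonempty compact subsets of ℝⁿ: it is nonnegative, symmetric, vanishes exactly when C = D, and satisfies the triangle inequality. -/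
open Real Set
open scoped ENNReal

noncomputable section

local notation "⟪" x ", " y "⟫" => @inner ℝ _ _ x y

/-- One-sided Hausdorff excess Λ(C,D) = max_{x ∈ C} min_{y ∈ D} ‖x − y‖. -/
def Lam {n : ℕ} (C D : Set (E n)) : ℝ :=
  sSup ((fun x => sInf ((fun y => ‖x - y‖) '' D)) '' C)

/-- ℓʳ-norm of the pair (a,b) ∈ ℝ², for r ∈ [1,∞]. -/
def lnorm (r : ℝ≥0∞) (a b : ℝ) : ℝ :=
  if r = ⊤ then max |a| |b| else (|a| ^ r.toReal + |b| ^ r.toReal) ^ (1 / r.toReal)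

/-- dis_r(C,D) = ‖(Λ(C,D), Λ(D,C))‖_r. -/
def dis {n : ℕ} (r : ℝ≥0∞) (C D : Set (E n)) : ℝ := lnorm r (Lam C D) (Lam D C)

lemma Lam_eq {n : ℕ} (C D : Set (E n)) :
    Lam C D = sSup ((fun x => Metric.infDist x D) '' C) := by
  unfold Lam
  congr 1
  refine Set.image_congr fun x _ => ?_
  rw [Metric.infDist_eq_iInf, iInf, ← Set.image_eq_range]
  simp [dist_eq_norm]

lemma Lam_bdd {n : ℕ} {C : Set (E n)} (D : Set (E n)) (hC : IsCompact C) :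
    BddAbove ((fun x => Metric.infDist x D) '' C) :=
  (hC.image (Metric.continuous_infDist_pt D)).bddAbove

lemma infDist_le_Lam {n : ℕ} {C D : Set (E n)} (hC : IsCompact C) {x : E n} (hx : x ∈ C) :
    Metric.infDist x D ≤ Lam C D := by
  rw [Lam_eq]; exact le_csSup (Lam_bdd D hC) (Set.mem_image_of_mem _ hx)

lemma Lam_le {n : ℕ} {C D : Set (E n)} (hCne : C.Nonempty) {a : ℝ}
    (h : ∀ x ∈ C, Metric.infDist x D ≤ a) : Lam C D ≤ a := by
  rw [Lam_eq]
  exact csSup_le (hCne.image _) (by rintro _ ⟨x, hx, rfl⟩; exact h x hx)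

lemma Lam_nonneg {n : ℕ} {C D : Set (E n)} (hC : IsCompact C) (hCne : C.Nonempty) :
    0 ≤ Lam C D := by
  obtain ⟨x, hx⟩ := hCne
  exact le_trans Metric.infDist_nonneg (infDist_le_Lam hC hx)

lemma Lam_eq_zero_iff {n : ℕ} {C D : Set (E n)} (hC : IsCompact C) (hCne : C.Nonempty)
    (hD : IsCompact D) (hDne : D.Nonempty) : Lam C D = 0 ↔ C ⊆ D := by
  constructor
  · intro h x hx
    have h1 : Metric.infDist x D ≤ 0 := h ▸ infDist_le_Lam hC hx
    have h2 : Metric.infDist x D = 0 := le_antisymm h1 Metric.infDist_nonneg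
    exact (hD.isClosed.mem_iff_infDist_zero hDne).2 h2
  · intro h
    refine le_antisymm (Lam_le hCne fun x hx => le_of_eq ?_) (Lam_nonneg hC hCne)
    exact Metric.infDist_zero_of_mem (h hx)

lemma Lam_triangle {n : ℕ} {C D Eset : Set (E n)} (hC : IsCompact C) (hCne : C.Nonempty)
    (hE : IsCompact Eset) (hEne : Eset.Nonempty) :
    Lam C D ≤ Lam C Eset + Lam Eset D := by
  refine Lam_le hCne fun x hx => ?_
  obtain ⟨z, hz, hzd⟩ := hE.exists_infDist_eq_dist hEne x
  have h1 : Metric.infDist x D ≤ Metric.infDist z D + dist x z :=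
    Metric.infDist_le_infDist_add_dist
  have h2 : Metric.infDist z D ≤ Lam Eset D := infDist_le_Lam hE hz
  have h3 : dist x z ≤ Lam C Eset := hzd ▸ infDist_le_Lam hC hx
  linarith

lemma one_le_toReal {r : ℝ≥0∞} (hr : 1 ≤ r) (hne : r ≠ ⊤) : 1 ≤ r.toReal := by
  simpa using ENNReal.toReal_mono hne hr

lemma lnorm_nonneg (r : ℝ≥0∞) (a b : ℝ) : 0 ≤ lnorm r a b := by
  unfold lnorm; split <;> positivity

lemma lnorm_comm (r : ℝ≥0∞) (a b : ℝ) : lnorm r a b = lnorm r b a := by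
  unfold lnorm; rw [max_comm, add_comm]

lemma lnorm_eq_zero {r : ℝ≥0∞} (hr : 1 ≤ r) {a b : ℝ} (ha : 0 ≤ a) (hb : 0 ≤ b)
    (h : lnorm r a b = 0) : a = 0 ∧ b = 0 := by
  unfold lnorm at h
  split at h
  · have h1 : |a| ≤ 0 := h ▸ le_max_left _ _
    have h2 : |b| ≤ 0 := h ▸ le_max_right _ _
    exact ⟨abs_eq_zero.mp (le_antisymm h1 (abs_nonneg a)),
      abs_eq_zero.mp (le_antisymm h2 (abs_nonneg b))⟩
  · rename_i hne
    have hp : 1 ≤ r.toReal := one_le_toReal hr hne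
    have hp0 : r.toReal ≠ 0 := by linarith
    have hsum : |a| ^ r.toReal + |b| ^ r.toReal = 0 := by
      by_contra hs
      have h1 : (0:ℝ) ≤ |a| ^ r.toReal := Real.rpow_nonneg (abs_nonneg a) _
      have h2 : (0:ℝ) ≤ |b| ^ r.toReal := Real.rpow_nonneg (abs_nonneg b) _
      have hpos : 0 < |a| ^ r.toReal + |b| ^ r.toReal := lt_of_le_of_ne (by linarith) (Ne.symm hs)
      have : (0:ℝ) < (|a| ^ r.toReal + |b| ^ r.toReal) ^ (1 / r.toReal) :=
        Real.rpow_pos_of_pos hpos _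
      linarith [h ▸ this]
    have h1 : (0:ℝ) ≤ |a| ^ r.toReal := Real.rpow_nonneg (abs_nonneg a) _
    have h2 : (0:ℝ) ≤ |b| ^ r.toReal := Real.rpow_nonneg (abs_nonneg b) _
    have ha' : |a| ^ r.toReal = 0 := by linarith
    have hb' : |b| ^ r.toReal = 0 := by linarith
    constructor
    · have := (Real.rpow_eq_zero (abs_nonneg a) hp0).1 ha'
      rwa [abs_of_nonneg ha] at this
    · have := (Real.rpow_eq_zero (abs_nonneg b) hp0).1 hb'
      rwa [abs_of_nonneg hb] at this

lemma lnorm_zero_zero {r : ℝ≥0∞} (hr : 1 ≤ r) : lnorm r 0 0 = 0 := by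
  unfold lnorm
  split
  · simp
  · rename_i hne
    have hp : 1 ≤ r.toReal := one_le_toReal hr hne
    have hp0 : r.toReal ≠ 0 := by linarith
    rw [abs_zero, Real.zero_rpow hp0, add_zero, Real.zero_rpow (by positivity)]

lemma lnorm_mono {r : ℝ≥0∞} (hr : 1 ≤ r) {a a' b b' : ℝ} (ha : 0 ≤ a) (hb : 0 ≤ b)
    (haa : a ≤ a') (hbb : b ≤ b') : lnorm r a b ≤ lnorm r a' b' := by
  have ha' : 0 ≤ a' := le_trans ha haa
  have hb' : 0 ≤ b' := le_trans hb hbb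
  unfold lnorm
  rw [abs_of_nonneg ha, abs_of_nonneg hb, abs_of_nonneg ha', abs_of_nonneg hb']
  split
  · exact max_le_max haa hbb
  · rename_i hne
    have hp : 1 ≤ r.toReal := one_le_toReal hr hne
    gcongr

lemma lnorm_add_le {r : ℝ≥0∞} (hr : 1 ≤ r) {a b c d : ℝ} (ha : 0 ≤ a) (hb : 0 ≤ b)
    (hc : 0 ≤ c) (hd : 0 ≤ d) : lnorm r (a + c) (b + d) ≤ lnorm r a b + lnorm r c d := by
  unfold lnorm
  rw [abs_of_nonneg ha, abs_of_nonneg hb, abs_of_nonneg hc, abs_of_nonneg hd,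
    abs_of_nonneg (by linarith : (0:ℝ) ≤ a + c), abs_of_nonneg (by linarith : (0:ℝ) ≤ b + d)]
  split
  · exact max_le (add_le_add (le_max_left a b) (le_max_left c d))
      (add_le_add (le_max_right a b) (le_max_right c d))
  · rename_i hne
    have hp : 1 ≤ r.toReal := one_le_toReal hr hne
    have := Real.Lp_add_le_of_nonneg (s := (Finset.univ : Finset (Fin 2)))
      (f := ![a, b]) (g := ![c, d]) (p := r.toReal) hp
      (fun i _ => by fin_cases i <;> simpa) (fun i _ => by fin_cases i <;> simpa)
    simpa [Fin.sum_univ_two] using this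

/-- for 1 ≤ r ≤ ∞, dis_r is a metric on the nonempty compact subsets of ℝⁿ. -/
theorem dis_is_metric {n : ℕ} (r : ℝ≥0∞) (hr : 1 ≤ r)
    (C D Eset : Set (E n))
    (hC : IsCompact C) (hD : IsCompact D) (hE : IsCompact Eset)
    (hCne : C.Nonempty) (hDne : D.Nonempty) (hEne : Eset.Nonempty) :
    0 ≤ dis r C D ∧
    dis r C D = dis r D C ∧
    (dis r C D = 0 ↔ C = D) ∧
    dis r C D ≤ dis r C Eset + dis r Eset D := by
  refine ⟨lnorm_nonneg r _ _, lnorm_comm r _ _, ?_, ?_⟩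
  · constructor
    · intro h
      obtain ⟨h1, h2⟩ := lnorm_eq_zero hr (Lam_nonneg hC hCne) (Lam_nonneg hD hDne) h
      exact Set.Subset.antisymm ((Lam_eq_zero_iff hC hCne hD hDne).1 h1)
        ((Lam_eq_zero_iff hD hDne hC hCne).1 h2)
    · rintro rfl
      have h1 : Lam C C = 0 := (Lam_eq_zero_iff hC hCne hC hCne).2 subset_rfl
      simp only [dis, h1]
      exact lnorm_zero_zero hr
  · calc dis r C D = lnorm r (Lam C D) (Lam D C) := rfl
      _ ≤ lnorm r (Lam C Eset + Lam Eset D) (Lam D Eset + Lam Eset C) :=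
        lnorm_mono hr (Lam_nonneg hC hCne) (Lam_nonneg hD hDne)
          (Lam_triangle hC hCne hE hEne) (Lam_triangle hD hDne hE hEne)
      _ = lnorm r (Lam C Eset + Lam Eset D) (Lam Eset C + Lam D Eset) := by rw [add_comm (Lam D Eset)]
      _ ≤ lnorm r (Lam C Eset) (Lam Eset C) + lnorm r (Lam Eset D) (Lam D Eset) :=
        lnorm_add_le hr (Lam_nonneg hC hCne) (Lam_nonneg hE hEne)
          (Lam_nonneg hE hEne) (Lam_nonneg hD hDne)
      _ = dis r C Eset + dis r Eset D := rfl
end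
end
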